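/- Inversion of the Sinkhorn potential (first part of the inversion lemma): assume the kernel matrix K = (exp(−c_{ij}/2))_{i,j} is positive definite. Let α ∈ △^d and let f ∈ ℝ^d satisfy f_i = 2 log Σ_j α_j exp(−(f_j + c_{ij})/2) for all i (i.e. f is the symmetric Sinkhorn potential ∇Ω(α)). Then α is the unique minimizer of β ↦ Φ_C(β, f) over △^d, i.e. g-softmax(∇Ω(α)) = α. -/

import Mathlib

open Finset Real Filter

noncomputable section

/-- The probability simplex in `ℝ^d`. -/
def simplexS (d : ℕ) : Set (Fin d → ℝ) := stdSimplex ℝ (Fin d)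


open scoped Classical

/-- `Φ_C(α,f) = Σ_{i,j} α_i α_j exp(-(f_i + f_j + c_{ij})/2)`. -/
def Phi {d : ℕ} (C : Matrix (Fin d) (Fin d) ℝ) (α f : Fin d → ℝ) : ℝ :=
  ∑ i, ∑ j, α i * α j * Real.exp (-(f i + f j + C i j) / 2)

/-- The geometric log-sum-exp `Ω_C^*(f) = -log min_{α ∈ △^d} Φ_C(α, f)`. -/
def OmegaStar {d : ℕ} (C : Matrix (Fin d) (Fin d) ℝ) (f : Fin d → ℝ) : ℝ :=
  -Real.log (sInf ((fun α => Phi C α f) '' simplexS d))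

/-- The geometric softmax: the (unique, when the kernel is positive definite) minimizer of
`Φ_C(·, f)` over the simplex. -/
def gsoftmax {d : ℕ} (C : Matrix (Fin d) (Fin d) ℝ) (f : Fin d → ℝ) : Fin d → ℝ :=
  if h : ∃ α ∈ simplexS d, IsMinOn (fun β => Phi C β f) (simplexS d) α
  then h.choose else fun _ => 0

/-- The soft C-transform `T(f,α)_i = -2 log Σ_j α_j exp((f_j - c_{ij})/2)`. -/
def Tsoft {d : ℕ} (C : Matrix (Fin d) (Fin d) ℝ) (f α : Fin d → ℝ) : Fin d → ℝ :=
  fun i => -2 * Real.log (∑ j, α j * Real.exp ((f j - C i j) / 2))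

/-- `f` is the symmetric Sinkhorn potential of `α`: `-f = T(-f, α)`. -/
def IsSinkhornPotential {d : ℕ} (C : Matrix (Fin d) (Fin d) ℝ) (α f : Fin d → ℝ) : Prop :=
  -f = Tsoft C (-f) α

/-- The symmetric Sinkhorn potential `∇Ω(α)`: the (unique, when the kernel is positive
definite) `f` with `-f = T(-f, α)`. -/
def gradOmega {d : ℕ} (C : Matrix (Fin d) (Fin d) ℝ) (α : Fin d → ℝ) : Fin d → ℝ :=
  if h : ∃ f : Fin d → ℝ, IsSinkhornPotential C α f then h.choose else fun _ => 0

/-- The extrapolation `f^E = -T(-(f - Ω_C^*(f)·1), g-softmax(f)) + Ω_C^*(f)·1`. -/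
def extrap {d : ℕ} (C : Matrix (Fin d) (Fin d) ℝ) (f : Fin d → ℝ) : Fin d → ℝ :=
  fun i => -(Tsoft C (fun j => -(f j - OmegaStar C f)) (gsoftmax C f) i) + OmegaStar C f

/-- The kernel matrix `K = (exp(-c_{ij}/2))_{ij}`. -/
def kernelK {d : ℕ} (C : Matrix (Fin d) (Fin d) ℝ) : Matrix (Fin d) (Fin d) ℝ :=
  Matrix.of fun i j => Real.exp (-(C i j) / 2)

/-!
Write `Φ_C(β, f) = βᵀ M β` with `M = D K D`, `D = diag(e^{-f/2})`; `M` is positive definite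
together with `K`. The Sinkhorn equation for `f` says exactly `M α = 𝟙`, so for `β` in the simplex
both cross terms of `(β - α)ᵀ M (β - α)` equal `Σ β = Σ α = 1`, giving
`βᵀ M β = (β - α)ᵀ M (β - α) + αᵀ M α`: `α` is the strict minimizer.
-/

namespace Matrix

variable {n R : Type*} [Fintype n]

theorem IsSymm.dotProduct_mulVec_eq_sub_add_of_mulVec_eq_const [CommRing R] {M : Matrix n n R}
    (hM : M.IsSymm) {α β : n → R} {c : R} (hα : M *ᵥ α = Function.const n c)
    (hsum : ∑ i, β i = ∑ i, α i) :
    β ⬝ᵥ M *ᵥ β = (β - α) ⬝ᵥ M *ᵥ (β - α) + α ⬝ᵥ M *ᵥ α := by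
  have hcross : α ⬝ᵥ M *ᵥ β = β ⬝ᵥ M *ᵥ α := by
    rw [dotProduct_mulVec, ← mulVec_transpose, hM.eq, dotProduct_comm]
  have hconst (γ : n → R) : γ ⬝ᵥ M *ᵥ α = c * ∑ i, γ i := by
    simp only [hα, dotProduct, Function.const_apply, Finset.mul_sum, mul_comm]
  simp only [mulVec_sub, sub_dotProduct, dotProduct_sub, hcross, hconst, Pi.sub_apply,
    Finset.sum_sub_distrib, hsum]
  ring

namespace PosDef

variable {M : Matrix n n ℝ} {α β : n → ℝ} {c : ℝ}

theorem dotProduct_mulVec_lt_of_mulVec_eq_const (hM : M.PosDef)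
    (hα : M *ᵥ α = Function.const n c) (hsum : ∑ i, β i = ∑ i, α i) (hne : β ≠ α) :
    α ⬝ᵥ M *ᵥ α < β ⬝ᵥ M *ᵥ β := by
  have hpos := hM.dotProduct_mulVec_pos (sub_ne_zero.mpr hne)
  rw [star_trivial] at hpos
  have hsymm : M.IsSymm := isHermitian_iff_isSymm.mp hM.isHermitian
  rw [hsymm.dotProduct_mulVec_eq_sub_add_of_mulVec_eq_const hα hsum]
  linarith

variable {S : Set (n → ℝ)}

theorem isMinOn_dotProduct_mulVec_of_mulVec_eq_const (hM : M.PosDef)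
    (hα : M *ᵥ α = Function.const n c) (hS : ∀ β ∈ S, ∑ i, β i = ∑ i, α i) :
    IsMinOn (fun β => β ⬝ᵥ M *ᵥ β) S α :=
  isMinOn_iff.mpr fun β hβ => by
    rcases eq_or_ne β α with rfl | hne
    · exact le_rfl
    · exact (hM.dotProduct_mulVec_lt_of_mulVec_eq_const hα (hS β hβ) hne).le

theorem eq_of_isMinOn_dotProduct_mulVec_of_mulVec_eq_const (hM : M.PosDef)
    (hα : M *ᵥ α = Function.const n c) (hS : ∀ β ∈ S, ∑ i, β i = ∑ i, α i) (hαS : α ∈ S)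
    (hβS : β ∈ S) (hmin : IsMinOn (fun γ => γ ⬝ᵥ M *ᵥ γ) S β) : β = α := by
  by_contra hne
  exact (isMinOn_iff.mp hmin α hαS).not_gt
    (hM.dotProduct_mulVec_lt_of_mulVec_eq_const hα (hS β hβS) hne)

end PosDef
end Matrix

theorem sum_mul_pos_of_mem_stdSimplex {ι : Type*} [Fintype ι] {α w : ι → ℝ}
    (hα : α ∈ stdSimplex ℝ ι) (hw : ∀ i, 0 < w i) : 0 < ∑ i, α i * w i := by
  have hterm (i : ι) : 0 ≤ α i * w i := mul_nonneg (hα.1 i) (hw i).le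
  refine (Finset.sum_nonneg fun i _ => hterm i).lt_of_ne fun h => one_ne_zero (α := ℝ) ?_
  have hzero := (Finset.sum_eq_zero_iff_of_nonneg fun i _ => hterm i).mp h.symm
  rw [← hα.2]
  exact Finset.sum_eq_zero fun i hi => (mul_eq_zero.mp (hzero i hi)).resolve_right (hw i).ne'

open Matrix

def scaledKernel {d : ℕ} (C : Matrix (Fin d) (Fin d) ℝ) (f : Fin d → ℝ) :
    Matrix (Fin d) (Fin d) ℝ :=
  of fun i j => Real.exp (-(f i + f j + C i j) / 2)

section ScaledKernel

variable {d : ℕ} {C : Matrix (Fin d) (Fin d) ℝ} {f α : Fin d → ℝ}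

theorem Phi_eq_dotProduct_mulVec (β : Fin d → ℝ) :
    Phi C β f = β ⬝ᵥ scaledKernel C f *ᵥ β := by
  simp only [Phi, dotProduct, mulVec, scaledKernel, of_apply, Finset.mul_sum]
  exact Finset.sum_congr rfl fun i _ => Finset.sum_congr rfl fun j _ => by ring

theorem scaledKernel_eq_diagonal_mul_kernelK_mul_diagonal :
    scaledKernel C f = diagonal (fun i => Real.exp (-f i / 2)) * kernelK C *
      diagonal (fun i => Real.exp (-f i / 2)) := by
  ext i j
  rw [mul_diagonal, diagonal_mul, scaledKernel, kernelK, of_apply, of_apply, ← Real.exp_add,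
    ← Real.exp_add]
  ring_nf

theorem posDef_scaledKernel (hK : (kernelK C).PosDef) (f : Fin d → ℝ) :
    (scaledKernel C f).PosDef := by
  have hinj : Function.Injective (diagonal (fun i => Real.exp (-f i / 2))).mulVec :=
    fun x y hxy => funext fun i => by
      simpa [mulVec_diagonal, Real.exp_ne_zero] using congrFun hxy i
  simpa [scaledKernel_eq_diagonal_mul_kernelK_mul_diagonal, diagonal_conjTranspose]
    using hK.conjTranspose_mul_mul_same hinj

theorem scaledKernel_mulVec_eq_one (hα : α ∈ simplexS d)
    (hf : ∀ i, f i = 2 * Real.log (∑ j, α j * Real.exp (-(f j + C i j) / 2))) :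
    scaledKernel C f *ᵥ α = Function.const (Fin d) 1 := by
  funext i
  set S := ∑ j, α j * Real.exp (-(f j + C i j) / 2)
  have hS : Real.exp (f i / 2) = S := by
    rw [hf i, mul_div_cancel_left₀ _ (two_ne_zero : (2 : ℝ) ≠ 0),
      Real.exp_log (sum_mul_pos_of_mem_stdSimplex hα fun j => Real.exp_pos _)]
  calc (scaledKernel C f *ᵥ α) i = Real.exp (-f i / 2) * S := by
        simp only [mulVec, dotProduct, scaledKernel, of_apply, S, Finset.mul_sum]
        refine Finset.sum_congr rfl fun j _ => ?_
        rw [mul_left_comm, ← Real.exp_add]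
        ring_nf
    _ = 1 := by rw [← hS, ← Real.exp_add, neg_div, neg_add_cancel, Real.exp_zero]

theorem gsoftmax_eq_of_isMinOn (hα : α ∈ simplexS d)
    (hmin : IsMinOn (fun β => Phi C β f) (simplexS d) α)
    (huniq : ∀ β ∈ simplexS d, IsMinOn (fun γ => Phi C γ f) (simplexS d) β → β = α) :
    gsoftmax C f = α := by
  have hex : ∃ γ ∈ simplexS d, IsMinOn (fun β => Phi C β f) (simplexS d) γ := ⟨α, hα, hmin⟩
  rw [gsoftmax, dif_pos hex]
  exact huniq _ hex.choose_spec.1 hex.choose_spec.2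

end ScaledKernel

theorem gsoftmax_inverts_sinkhorn_potential_general (d : ℕ)
    (C : Matrix (Fin d) (Fin d) ℝ)
    (hK : (kernelK C).PosDef) (α : Fin d → ℝ) (hα : α ∈ simplexS d) (f : Fin d → ℝ)
    (hf : ∀ i, f i = 2 * Real.log (∑ j, α j * Real.exp (-(f j + C i j) / 2))) :
    (IsMinOn (fun β => Phi C β f) (simplexS d) α ∧
      ∀ β, β ∈ simplexS d → IsMinOn (fun γ => Phi C γ f) (simplexS d) β → β = α) ∧
    gsoftmax C f = α := by
  have hM := posDef_scaledKernel hK f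
  have hrow := scaledKernel_mulVec_eq_one hα hf
  have hsum : ∀ β ∈ simplexS d, ∑ i, β i = ∑ i, α i := fun β hβ => hβ.2.trans hα.2.symm
  have hPhi : (fun β => Phi C β f) = fun β => β ⬝ᵥ scaledKernel C f *ᵥ β :=
    funext Phi_eq_dotProduct_mulVec
  have hmin : IsMinOn (fun β => Phi C β f) (simplexS d) α :=
    hPhi ▸ hM.isMinOn_dotProduct_mulVec_of_mulVec_eq_const hrow hsum
  have huniq : ∀ β ∈ simplexS d, IsMinOn (fun γ => Phi C γ f) (simplexS d) β → β = α :=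
    fun β hβ hβmin => hM.eq_of_isMinOn_dotProduct_mulVec_of_mulVec_eq_const hrow hsum hα hβ
      (hPhi ▸ hβmin)
  exact ⟨⟨hmin, huniq⟩, gsoftmax_eq_of_isMinOn hα hmin huniq⟩

/-- Inversion of the Sinkhorn potential (first part): if `f = ∇Ω(α)` is the symmetric
Sinkhorn potential of `α ∈ △^d`, then `α` is the unique minimizer of `β ↦ Φ_C(β,f)` over
the simplex; i.e. `g-softmax(∇Ω(α)) = α`. -/
theorem gsoftmax_inverts_sinkhorn_potential (d : ℕ) (hd : 1 ≤ d)
    (C : Matrix (Fin d) (Fin d) ℝ) (hCsym : C.IsSymm) (hCdiag : ∀ i, C i i = 0)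
    (hK : (kernelK C).PosDef) (α : Fin d → ℝ) (hα : α ∈ simplexS d) (f : Fin d → ℝ)
    (hf : ∀ i, f i = 2 * Real.log (∑ j, α j * Real.exp (-(f j + C i j) / 2))) :
    (IsMinOn (fun β => Phi C β f) (simplexS d) α ∧
      ∀ β, β ∈ simplexS d → IsMinOn (fun γ => Phi C γ f) (simplexS d) β → β = α) ∧
    gsoftmax C f = α :=
  gsoftmax_inverts_sinkhorn_potential_general d C hK α hα f hf
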